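/- arXiv:1611.10147 — 6 statements merged into one kernel-verified Lean document; each statement's English description precedes it below -/
import Mathlib

section
/- For every ℓ ≥ 1, the polynomial identity ((1+x)/2)^{ℓ+1} · A_ℓ(x) - A_ℓ(x²) = -((1-x)/2)^{ℓ+1} · A_ℓ(-x) holds in ℚ[x], where A_ℓ is the Eulerian polynomial. -/
/-!
With `S(x) = ∑ nˡ xⁿ`, so that `A(x) = (1 - x)ˡ⁺¹ S(x)`, only the even terms survive in
`S(x) + S(-x)`, and they give `S(x) + S(-x) = 2ˡ⁺¹ S(x²)`. Multiplying by `((1 - x²)/2)ˡ⁺¹` turns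
this into `((1+x)/2)ˡ⁺¹ A(x) + ((1-x)/2)ˡ⁺¹ A(-x) = A(x²)`, an identity of power series, hence of
polynomials.
-/

open PowerSeries Polynomial

namespace Polynomial

variable {R : Type*} [CommRing R]

theorem coe_comp_X_pow (p : R[X]) {n : ℕ} (hn : n ≠ 0) :
    ((p.comp (X ^ n) : R[X]) : PowerSeries R) = PowerSeries.expand n hn p := by
  ext m
  rw [← expand_eq_comp_X_pow, coeff_coe, coeff_expand (Nat.pos_of_ne_zero hn),
    PowerSeries.coeff_expand, coeff_coe]

theorem coe_comp_neg_X (p : R[X]) :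
    ((p.comp (-X) : R[X]) : PowerSeries R) = rescale (-1) p := by
  have h : coeToPowerSeries.ringHom.comp (compRingHom (-X)) =
      (rescale (-1)).comp (coeToPowerSeries.ringHom : R[X] →+* PowerSeries R) := by
    refine ringHom_ext (fun a => ?_) (by simp)
    ext n
    simp only [RingHom.comp_apply, coe_compRingHom_apply, C_comp,
      coeToPowerSeries.ringHom_apply, coe_C, coeff_rescale, PowerSeries.coeff_C]
    split_ifs with hn <;> simp [hn]
  exact RingHom.congr_fun h p

end Polynomial

namespace PowerSeries

variable {R : Type*} [CommRing R]

theorem add_rescale_neg_one (f : R⟦X⟧) :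
    f + rescale (-1) f = C 2 * expand 2 two_ne_zero (mk fun n => coeff (2 * n) f) := by
  ext n
  rw [map_add, coeff_rescale, coeff_C_mul, coeff_expand]
  rcases Nat.even_or_odd' n with ⟨m, rfl | rfl⟩
  · rw [if_pos (dvd_mul_right 2 m), Nat.mul_div_cancel_left m two_pos, coeff_mk, pow_mul,
      neg_one_sq, one_pow]
    ring
  · simp [pow_succ, pow_mul, Nat.not_two_dvd_bit1]

theorem mk_pow_add_rescale_neg_one (ℓ : ℕ) :
    mk (fun n => (n : R) ^ ℓ) + rescale (-1) (mk fun n => (n : R) ^ ℓ) =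
      C (2 ^ (ℓ + 1)) * expand 2 two_ne_zero (mk fun n => (n : R) ^ ℓ) := by
  have h_even : (mk fun n => coeff (2 * n) (mk fun n => (n : R) ^ ℓ)) =
      C (2 ^ ℓ) * mk fun n => (n : R) ^ ℓ := by
    ext n
    rw [coeff_mk, coeff_C_mul, coeff_mk, coeff_mk, Nat.cast_mul, Nat.cast_ofNat, mul_pow]
  rw [add_rescale_neg_one, h_even, map_mul, expand_C, pow_succ', map_mul, mul_assoc]

end PowerSeries

theorem eulerian_identity_m2_general (ℓ : ℕ) (A : Polynomial ℚ)
    (hA : (A : PowerSeries ℚ) =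
      (1 - PowerSeries.X) ^ (ℓ + 1) * PowerSeries.mk (fun n => (n : ℚ) ^ ℓ)) :
    (Polynomial.C ((2 : ℚ))⁻¹ * (1 + Polynomial.X)) ^ (ℓ + 1) * A -
        A.comp (Polynomial.X ^ 2) =
      -((Polynomial.C ((2 : ℚ))⁻¹ * (1 - Polynomial.X)) ^ (ℓ + 1) *
        A.comp (-Polynomial.X)) := by
  set S : ℚ⟦X⟧ := mk fun n => (n : ℚ) ^ ℓ
  have h_sq : ((A.comp (Polynomial.X ^ 2) : ℚ[X]) : ℚ⟦X⟧) =
      (1 + PowerSeries.X) ^ (ℓ + 1) * (1 - PowerSeries.X) ^ (ℓ + 1) * expand 2 two_ne_zero S := by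
    rw [coe_comp_X_pow _ two_ne_zero, hA, map_mul, map_pow, map_sub, map_one, PowerSeries.expand_X, ← mul_pow]
    ring
  have h_neg : ((A.comp (-Polynomial.X) : ℚ[X]) : ℚ⟦X⟧) =
      (1 + PowerSeries.X) ^ (ℓ + 1) * rescale (-1) S := by
    rw [coe_comp_neg_X, hA, map_mul, map_pow, map_sub, map_one, rescale_neg_one_X, sub_neg_eq_add]
  have h_half : PowerSeries.C (2⁻¹ : ℚ) ^ (ℓ + 1) * PowerSeries.C (2 ^ (ℓ + 1)) = 1 := by
    rw [← map_pow, ← map_mul, ← mul_pow]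
    norm_num
  rw [← coe_inj]
  push_cast [h_sq, h_neg, hA, mul_pow]
  linear_combination (PowerSeries.C (2⁻¹ : ℚ) ^ (ℓ + 1) * (1 + PowerSeries.X) ^ (ℓ + 1) *
      (1 - PowerSeries.X) ^ (ℓ + 1)) * mk_pow_add_rescale_neg_one (R := ℚ) ℓ +
    (1 + PowerSeries.X) ^ (ℓ + 1) * (1 - PowerSeries.X) ^ (ℓ + 1) * expand 2 two_ne_zero S * h_half

/-- For `ℓ ≥ 1`, the Eulerian polynomial satisfies the identity
`((1+x)/2)^{ℓ+1}·A_ℓ(x) - A_ℓ(x²) = -((1-x)/2)^{ℓ+1}·A_ℓ(-x)` in `ℚ[x]`. -/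
theorem eulerian_identity_m2 (ℓ : ℕ) (hℓ : 1 ≤ ℓ) (A : Polynomial ℚ)
    (hA : (A : PowerSeries ℚ) =
      (1 - PowerSeries.X) ^ (ℓ + 1) * PowerSeries.mk (fun n => (n : ℚ) ^ ℓ)) :
    (Polynomial.C ((2 : ℚ))⁻¹ * (1 + Polynomial.X)) ^ (ℓ + 1) * A -
        A.comp (Polynomial.X ^ 2) =
      -((Polynomial.C ((2 : ℚ))⁻¹ * (1 - Polynomial.X)) ^ (ℓ + 1) *
        A.comp (-Polynomial.X)) :=
  eulerian_identity_m2_general ℓ A hA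
end

section
/- For ℓ ≥ 1, the congruence A_ℓ(x²) ≡ ((1+x)/2)^{ℓ+1} · A_ℓ(x) mod (x-1)^{ℓ+1} holds in ℚ[x]; i.e., (x-1)^{ℓ+1} divides A_ℓ(x²) - ((1+x)/2)^{ℓ+1} A_ℓ(x). -/
/-!
With `f(x) = ∑ nˡ xⁿ`, the odd terms cancel in `f(x) + f(-x)` and the even ones give
`f(x) + f(-x) = 2ˡ⁺¹ f(x²)`. Multiplying by `(1 - x²)ˡ⁺¹ = (1 - x)ˡ⁺¹ (1 + x)ˡ⁺¹` yields
`2ˡ⁺¹ A(x²) = (1 + x)ˡ⁺¹ A(x) + (1 - x)ˡ⁺¹ A(-x)`, whose last term is divisible by `(x - 1)ˡ⁺¹`.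
-/

open Polynomial
open scoped PowerSeries

namespace Polynomial

variable {R : Type*}

theorem coe_comp_C_mul_X [CommSemiring R] (p : R[X]) (r : R) :
    ((p.comp (C r * X) : R[X]) : R⟦X⟧) = PowerSeries.rescale r (p : R⟦X⟧) := by
  ext n
  rw [PowerSeries.coeff_rescale, coeff_coe, coeff_coe, comp_C_mul_X_coeff, mul_comm]

theorem coe_expand_eq_expand_coe [CommRing R] {n : ℕ} (hn : n ≠ 0) (p : R[X]) :
    ((expand R n p : R[X]) : R⟦X⟧) = PowerSeries.expand n hn (p : R⟦X⟧) := by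
  ext k
  rw [coeff_coe, Polynomial.coeff_expand (Nat.pos_of_ne_zero hn), PowerSeries.coeff_expand]
  simp only [coeff_coe]

end Polynomial

namespace PowerSeries

theorem mk_natCast_pow_add_rescale_neg_one {R : Type*} [CommRing R] (ℓ : ℕ) :
    mk (fun n => (n : R) ^ ℓ) + rescale (-1) (mk fun n => (n : R) ^ ℓ) =
      C (2 ^ (ℓ + 1)) * expand 2 two_ne_zero (mk fun n => (n : R) ^ ℓ) := by
  ext n
  rw [map_add, coeff_rescale, coeff_C_mul, PowerSeries.coeff_expand, coeff_mk]
  rcases Nat.even_or_odd' n with ⟨m, rfl | rfl⟩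
  · rw [if_pos (dvd_mul_right 2 m), Nat.mul_div_cancel_left m two_pos, coeff_mk,
      (even_two_mul m).neg_one_pow]
    push_cast
    ring
  · rw [if_neg (by omega), (odd_two_mul_add_one m).neg_one_pow]
    ring

end PowerSeries

theorem eulerian_comp_X_sq {R : Type*} [CommRing R] (ℓ : ℕ) (A : R[X])
    (hA : (A : R⟦X⟧) =
      (1 - PowerSeries.X) ^ (ℓ + 1) * PowerSeries.mk (fun n => (n : R) ^ ℓ)) :
    C (2 ^ (ℓ + 1)) * A.comp (X ^ 2) =
      (1 + X) ^ (ℓ + 1) * A + (1 - X) ^ (ℓ + 1) * A.comp (-X) := by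
  set f : R⟦X⟧ := PowerSeries.mk fun n => (n : R) ^ ℓ
  have h_expand : ((A.comp (X ^ 2) : R[X]) : R⟦X⟧) =
      (1 - PowerSeries.X ^ 2) ^ (ℓ + 1) * PowerSeries.expand 2 two_ne_zero f := by
    rw [← expand_eq_comp_X_pow, coe_expand_eq_expand_coe two_ne_zero, hA]
    simp only [map_mul, map_pow, map_sub, map_one, PowerSeries.expand_X]
  have h_neg : ((A.comp (-X) : R[X]) : R⟦X⟧) =
      (1 + PowerSeries.X) ^ (ℓ + 1) * PowerSeries.rescale (-1) f := by
    have : (-X : R[X]) = C (-1) * X := by simp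
    rw [this, coe_comp_C_mul_X, hA, map_mul, map_pow, map_sub, map_one, PowerSeries.rescale_X,
      map_neg, map_one, neg_one_mul, sub_neg_eq_add]
  have h_sum := PowerSeries.mk_natCast_pow_add_rescale_neg_one (R := R) ℓ
  apply Polynomial.coe_inj.mp
  push_cast
  have h_factor : (1 - PowerSeries.X ^ 2 : R⟦X⟧) = (1 - PowerSeries.X) * (1 + PowerSeries.X) := by
    ring
  rw [h_expand, h_neg, hA, h_factor, mul_pow]
  linear_combination -(1 - PowerSeries.X) ^ (ℓ + 1) * (1 + PowerSeries.X) ^ (ℓ + 1) * h_sum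

open PowerSeries Polynomial

theorem eulerian_congruence_m2_general (ℓ : ℕ) (A : Polynomial ℚ)
    (hA : (A : PowerSeries ℚ) =
      (1 - PowerSeries.X) ^ (ℓ + 1) * PowerSeries.mk (fun n => (n : ℚ) ^ ℓ)) :
    (Polynomial.X - 1) ^ (ℓ + 1) ∣
      A.comp (Polynomial.X ^ 2) -
        (Polynomial.C ((2 : ℚ))⁻¹ * (1 + Polynomial.X)) ^ (ℓ + 1) * A := by
  have h := eulerian_comp_X_sq ℓ A hA
  have h_half : Polynomial.C ((2 : ℚ)⁻¹) ^ (ℓ + 1) * Polynomial.C (2 ^ (ℓ + 1)) = 1 := by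
    rw [← map_pow, ← map_mul, ← mul_pow, inv_mul_cancel₀ two_ne_zero, one_pow, map_one]
  have h_sign :
      (1 - Polynomial.X : ℚ[X]) ^ (ℓ + 1) = (-1) ^ (ℓ + 1) * (Polynomial.X - 1) ^ (ℓ + 1) := by
    rw [← neg_sub, neg_pow]
  refine ⟨(-1) ^ (ℓ + 1) * Polynomial.C ((2 : ℚ)⁻¹) ^ (ℓ + 1) * A.comp (-Polynomial.X), ?_⟩
  rw [mul_pow]
  linear_combination Polynomial.C ((2 : ℚ)⁻¹) ^ (ℓ + 1) * h - A.comp (Polynomial.X ^ 2) * h_half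
    + Polynomial.C ((2 : ℚ)⁻¹) ^ (ℓ + 1) * A.comp (-Polynomial.X) * h_sign

/-- For `ℓ ≥ 1`, `A_ℓ(x²) ≡ ((1+x)/2)^{ℓ+1}·A_ℓ(x) mod (x-1)^{ℓ+1}` in `ℚ[x]`. -/
theorem eulerian_congruence_m2 (ℓ : ℕ) (hℓ : 1 ≤ ℓ) (A : Polynomial ℚ)
    (hA : (A : PowerSeries ℚ) =
      (1 - PowerSeries.X) ^ (ℓ + 1) * PowerSeries.mk (fun n => (n : ℚ) ^ ℓ)) :
    (Polynomial.X - 1) ^ (ℓ + 1) ∣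
      A.comp (Polynomial.X ^ 2) -
        (Polynomial.C ((2 : ℚ))⁻¹ * (1 + Polynomial.X)) ^ (ℓ + 1) * A :=
  eulerian_congruence_m2_general ℓ A hA
end

section
/- For all ℓ, m ≥ 2, the Eulerian polynomial satisfies A_ℓ(x^m) ≡ ((1 + x + x² + ⋯ + x^{m-1})/m)^{ℓ+1} · A_ℓ(x) mod (x-1)^{ℓ+1} in ℚ[x]. -/
/-!
Write `θ = X d/dX` and `F = ∑ nˡ Xⁿ = θˡ (1 - X)⁻¹`, so that `A = (1 - X)ˡ⁺¹ F`.
Since `θ (f(Xᵐ)) = m (θ f)(Xᵐ)`, we get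
`mˡ⁺¹ F(Xᵐ) - F = θˡ (m / (1 - Xᵐ) - 1 / (1 - X)) = θˡ (W / V)`,
where `V = 1 + X + ⋯ + Xᵐ⁻¹` and `m - V = (1 - X) W`. As `θ` is a derivation preserving
polynomials, `Vˡ⁺¹ θˡ (W / V)` is a polynomial `q`, and multiplying out with
`1 - Xᵐ = (1 - X) V` gives `mˡ⁺¹ A(Xᵐ) - Vˡ⁺¹ A = (1 - X)ˡ⁺¹ q`.
-/

open PowerSeries Polynomial Finset

namespace Derivation

variable {R S : Type*} [CommSemiring R] [CommRing S] [Algebra R S] {D : Derivation R S S}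
  {T : Subring S} {v : S}

theorem pow_succ_mul_apply_mem (hT : ∀ t ∈ T, D t ∈ T) (hv : v ∈ T) {j : ℕ} {f : S}
    (hf : v ^ j * f ∈ T) : v ^ (j + 1) * D f ∈ T := by
  have hD : v ^ (j + 1) * D f = v * D (v ^ j * f) - j • (D v * (v ^ j * f)) := by
    rw [D.leibniz, D.leibniz_pow]
    cases j <;> simp only [smul_eq_mul, nsmul_eq_mul, Nat.add_sub_cancel] <;> ring
  rw [hD]
  exact T.sub_mem (T.mul_mem hv (hT _ hf)) (T.nsmul_mem (T.mul_mem (hT _ hv) hf) j)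

theorem pow_add_mul_iterate_apply_mem (hT : ∀ t ∈ T, D t ∈ T) (hv : v ∈ T) (k : ℕ) {j : ℕ}
    {f : S} (hf : v ^ j * f ∈ T) : v ^ (j + k) * (⇑D)^[k] f ∈ T := by
  induction k generalizing j f with
  | zero => simpa using hf
  | succ k ih =>
    rw [Function.iterate_succ_apply, ← add_comm 1 k, ← add_assoc]
    exact ih (pow_succ_mul_apply_mem hT hv hf)

end Derivation

@[norm_cast]
theorem Polynomial.coe_sum {R ι : Type*} [CommSemiring R] (s : Finset ι) (f : ι → R[X]) :
    ((∑ i ∈ s, f i : R[X]) : R⟦X⟧) = ∑ i ∈ s, (f i : R⟦X⟧) :=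
  map_sum coeToPowerSeries.ringHom f s

namespace PowerSeries

variable {R : Type*} [CommRing R]

variable (R) in
noncomputable def eulerOp : Derivation R R⟦X⟧ R⟦X⟧ := (X : R⟦X⟧) • d⁄dX R

theorem eulerOp_apply (f : R⟦X⟧) : eulerOp R f = X * d⁄dX R f := rfl

theorem coeff_eulerOp (n : ℕ) (f : R⟦X⟧) : coeff n (eulerOp R f) = n * coeff n f := by
  rcases n with _ | n
  · simp [eulerOp_apply]
  · rw [eulerOp_apply, coeff_succ_X_mul, coeff_derivative, mul_comm]
    push_cast; rfl

theorem coeff_iterate_eulerOp (k n : ℕ) (f : R⟦X⟧) :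
    coeff n ((⇑(eulerOp R))^[k] f) = n ^ k * coeff n f := by
  induction k with
  | zero => simp
  | succ k ih => rw [Function.iterate_succ_apply', coeff_eulerOp, ih, pow_succ]; ring

theorem eulerOp_coe (p : R[X]) :
    eulerOp R (p : R⟦X⟧) = ((Polynomial.X * Polynomial.derivative p : R[X]) : R⟦X⟧) := by
  rw [eulerOp_apply, derivative_coe]; push_cast; rfl

theorem eulerOp_mem_range_coe :
    ∀ f ∈ (coeToPowerSeries.ringHom : R[X] →+* R⟦X⟧).range,
      eulerOp R f ∈ (coeToPowerSeries.ringHom : R[X] →+* R⟦X⟧).range := by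
  rintro _ ⟨p, rfl⟩
  exact ⟨_, (eulerOp_coe p).symm⟩

theorem expand_coe (m : ℕ) (hm : m ≠ 0) (p : R[X]) :
    PowerSeries.expand m hm (p : R⟦X⟧) = (Polynomial.expand R m p : R⟦X⟧) := by
  ext n
  simp [PowerSeries.coeff_expand, Polynomial.coeff_expand (Nat.pos_of_ne_zero hm)]

theorem geom_sum_mul_natCast_mul_expand_sub_mem_range (m : ℕ) (hm : m ≠ 0) :
    (∑ i ∈ range m, (X : R⟦X⟧) ^ i) * ((m : R⟦X⟧) * PowerSeries.expand m hm (mk 1) - mk 1) ∈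
      (coeToPowerSeries.ringHom : R[X] →+* R⟦X⟧).range := by
  set V : R⟦X⟧ := ∑ i ∈ range m, X ^ i
  set w : R[X] := ∑ i ∈ range m, ∑ j ∈ range i, Polynomial.X ^ j
  have hw : (1 - X) * (w : R⟦X⟧) = (m : R⟦X⟧) - V := by
    simp only [w, V, Polynomial.coe_sum, Polynomial.coe_pow, Polynomial.coe_X]
    rw [mul_sum]
    simp only [mul_neg_geom_sum, sum_sub_distrib, sum_const, card_range, nsmul_one]
  have hexp : PowerSeries.expand m hm (mk 1 : R⟦X⟧) * (1 - X ^ m) = 1 := by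
    simpa using congrArg (PowerSeries.expand m hm) (mk_one_mul_one_sub_eq_one R)
  have hVE : (1 - X) * (V * ((m : R⟦X⟧) * PowerSeries.expand m hm (mk 1) - mk 1)) =
      (1 - X) * (w : R⟦X⟧) :=
    calc _ = (m : R⟦X⟧) * (PowerSeries.expand m hm (mk 1) * ((1 - X) * V)) -
          V * (mk 1 * (1 - X)) := by ring
      _ = (1 - X) * (w : R⟦X⟧) := by
          rw [mul_neg_geom_sum, hexp, mk_one_mul_one_sub_eq_one, hw]; ring
  refine ⟨w, ?_⟩
  calc (w : R⟦X⟧) = mk 1 * ((1 - X) * (w : R⟦X⟧)) := by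
        rw [← mul_assoc, mk_one_mul_one_sub_eq_one, one_mul]
    _ = _ := by rw [← hVE, ← mul_assoc, mk_one_mul_one_sub_eq_one, one_mul]

theorem exists_coe_eq_geom_sum_pow_mul (ℓ m : ℕ) (hm : m ≠ 0) :
    ∃ q : R[X], (q : R⟦X⟧) = (∑ i ∈ range m, (X : R⟦X⟧) ^ i) ^ (ℓ + 1) *
      ((m : R⟦X⟧) ^ (ℓ + 1) * PowerSeries.expand m hm (mk fun n => (n : R) ^ ℓ) -
        mk fun n => (n : R) ^ ℓ) := by
  have hV : ∑ i ∈ range m, (X : R⟦X⟧) ^ i ∈ (coeToPowerSeries.ringHom : R[X] →+* R⟦X⟧).range :=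
    ⟨∑ i ∈ range m, Polynomial.X ^ i, by simp⟩
  have hθ : (⇑(eulerOp R))^[ℓ] ((m : R⟦X⟧) * PowerSeries.expand m hm (mk 1) - mk 1) =
      (m : R⟦X⟧) ^ (ℓ + 1) * PowerSeries.expand m hm (mk fun n => (n : R) ^ ℓ) -
        mk fun n => (n : R) ^ ℓ := by
    ext n
    simp only [coeff_iterate_eulerOp, map_sub, ← map_natCast (C (R := R)), ← map_pow,
      coeff_C_mul, PowerSeries.coeff_expand, coeff_mk, Pi.one_apply]
    split_ifs with h
    · obtain ⟨q, rfl⟩ := h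
      rw [Nat.mul_div_cancel_left q (Nat.pos_of_ne_zero hm)]
      push_cast; ring
    · simp
  obtain ⟨q, hq⟩ := Derivation.pow_add_mul_iterate_apply_mem eulerOp_mem_range_coe hV ℓ
    (j := 1) (by simpa using geom_sum_mul_natCast_mul_expand_sub_mem_range (R := R) m hm)
  exact ⟨q, by simpa [hθ, add_comm] using hq⟩

end PowerSeries

theorem eulerian_congruence_general (ℓ m : ℕ) (hm : 2 ≤ m) (A : Polynomial ℚ)
    (hA : (A : PowerSeries ℚ) =
      (1 - PowerSeries.X) ^ (ℓ + 1) * PowerSeries.mk (fun n => (n : ℚ) ^ ℓ)) :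
    (Polynomial.X - 1) ^ (ℓ + 1) ∣
      A.comp (Polynomial.X ^ m) -
        (Polynomial.C ((m : ℚ))⁻¹ * ∑ i ∈ Finset.range m, Polynomial.X ^ i) ^ (ℓ + 1)
          * A := by
  have hm0 : m ≠ 0 := by omega
  obtain ⟨q, hq⟩ := exists_coe_eq_geom_sum_pow_mul (R := ℚ) ℓ m hm0
  have hcomp : (A.comp (Polynomial.X ^ m) : ℚ⟦X⟧) =
      (1 - PowerSeries.X ^ m) ^ (ℓ + 1) *
        PowerSeries.expand m hm0 (mk fun n => (n : ℚ) ^ ℓ) := by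
    rw [← expand_eq_comp_X_pow, ← expand_coe m hm0, hA, map_mul, map_pow, map_sub, map_one,
      PowerSeries.expand_X]
  have hinv : PowerSeries.C ((m : ℚ)⁻¹) ^ (ℓ + 1) * (m : ℚ⟦X⟧) ^ (ℓ + 1) = 1 := by
    rw [← map_natCast PowerSeries.C, ← mul_pow, ← map_mul,
      inv_mul_cancel₀ (by exact_mod_cast hm0), map_one, one_pow]
  have key : A.comp (Polynomial.X ^ m) -
      (Polynomial.C ((m : ℚ))⁻¹ * ∑ i ∈ Finset.range m, Polynomial.X ^ i) ^ (ℓ + 1) * A =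
        (1 - Polynomial.X) ^ (ℓ + 1) * (Polynomial.C ((m : ℚ))⁻¹ ^ (ℓ + 1) * q) := by
    apply Polynomial.coe_injective
    push_cast
    rw [hcomp, hA, hq, ← mul_neg_geom_sum, mul_pow]
    linear_combination -(1 - PowerSeries.X) ^ (ℓ + 1) *
      (∑ i ∈ range m, PowerSeries.X ^ i) ^ (ℓ + 1) *
      PowerSeries.expand m hm0 (mk fun n => (n : ℚ) ^ ℓ) * hinv
  rw [key]
  exact dvd_mul_of_dvd_left (pow_dvd_pow_of_dvd ⟨-1, by ring⟩ _) _

/-- For `ℓ, m ≥ 2`, the Eulerian polynomial satisfies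
`A_ℓ(x^m) ≡ ((1+x+⋯+x^{m-1})/m)^{ℓ+1}·A_ℓ(x) mod (x-1)^{ℓ+1}` in `ℚ[x]`. -/
theorem eulerian_congruence (ℓ m : ℕ) (hℓ : 2 ≤ ℓ) (hm : 2 ≤ m) (A : Polynomial ℚ)
    (hA : (A : PowerSeries ℚ) =
      (1 - PowerSeries.X) ^ (ℓ + 1) * PowerSeries.mk (fun n => (n : ℚ) ^ ℓ)) :
    (Polynomial.X - 1) ^ (ℓ + 1) ∣
      A.comp (Polynomial.X ^ m) -
        (Polynomial.C ((m : ℚ))⁻¹ * ∑ i ∈ Finset.range m, Polynomial.X ^ i) ^ (ℓ + 1)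
          * A :=
  eulerian_congruence_general ℓ m hm A hA
end

section
/- If ℓ ≥ 2 is even, then A_ℓ(-1) = 0, and moreover the strengthened congruence A_ℓ(x^m) ≡ ((1 + x + ⋯ + x^{m-1})/m)^{ℓ+1} · A_ℓ(x) mod (x-1)^{ℓ+2} holds for all m ≥ 2. -/
/-!
Put `x = e^t`. Since `∑ n^ℓ x^n = (d/dt)^ℓ (1 / (1 - e^t))` and `1 / (1 - e^t) = -1/t + R(t)`
with `R(t) = -∑ B_{n+1} t^n / (n+1)!`, one gets
`A_ℓ(e^t) = ℓ! U(t)^{ℓ+1} + (1 - e^t)^{ℓ+1} R^{(ℓ)}(t)`, where `U(t) = (e^t - 1)/t`.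
Under `t ↦ mt` the first term is matched exactly by the factor
`((1 + e^t + ⋯ + e^{(m-1)t})/m)^{ℓ+1} = (U(mt)/U(t))^{ℓ+1}`, so the difference in the
congruence is `(-t U(mt))^{ℓ+1} (m^{ℓ+1} R^{(ℓ)}(mt) - R^{(ℓ)}(t))`. This vanishes to order
`ℓ + 2` at `t = 0` because `R^{(ℓ)}(0)` is a multiple of `B_{ℓ+1} = 0`; and since `e^t - 1` is
`t` times a unit, `t^k ∣ p(e^t)` forces `(x - 1)^k ∣ p(x)`.

The vanishing `A_ℓ(-1) = 0` is the palindromy `x^{ℓ+1} A_ℓ(1/x) = A_ℓ(x)` at `x = -1`, as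
`ℓ + 1` is odd.
-/

open PowerSeries Polynomial Finset

-- Applying `x d/dx` to `∑ n^ℓ x^n = A_ℓ(x) / (1 - x)^{ℓ+1}` gives this recurrence.
noncomputable def eulerian : ℕ → ℚ[X]
  | 0 => 1
  | ℓ + 1 =>
    Polynomial.X * ((1 - Polynomial.X) * derivative (eulerian ℓ) + (ℓ + 1 : ℚ[X]) * eulerian ℓ)

theorem mk_natCast_pow_succ_eq_X_mul_derivative {R : Type*} [CommSemiring R] (ℓ : ℕ) :
    PowerSeries.mk (fun n => (n : R) ^ (ℓ + 1)) =
      PowerSeries.X * d⁄dX R (PowerSeries.mk fun n => (n : R) ^ ℓ) := by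
  ext (_ | n)
  · simp
  · rw [coeff_succ_X_mul, PowerSeries.coeff_derivative, coeff_mk, coeff_mk]
    push_cast
    ring

theorem coe_eulerian (ℓ : ℕ) :
    (eulerian ℓ : ℚ⟦X⟧) =
      (1 - PowerSeries.X) ^ (ℓ + 1) * PowerSeries.mk fun n => (n : ℚ) ^ ℓ := by
  induction ℓ with
  | zero =>
    ext (_ | _ | n) <;> simp [eulerian, sub_mul, PowerSeries.coeff_one]
  | succ ℓ ih =>
    have hD : (derivative (eulerian ℓ) : ℚ⟦X⟧) =
        (1 - PowerSeries.X) ^ (ℓ + 1) * d⁄dX ℚ (PowerSeries.mk fun n => (n : ℚ) ^ ℓ)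
          - (ℓ + 1 : ℚ⟦X⟧) * (1 - PowerSeries.X) ^ ℓ *
            PowerSeries.mk fun n => (n : ℚ) ^ ℓ := by
      rw [← derivative_coe, ih, Derivation.leibniz, Derivation.leibniz_pow, map_sub,
        Derivation.map_one_eq_zero, PowerSeries.derivative_X]
      simp only [smul_eq_mul, nsmul_eq_mul, Nat.add_sub_cancel]
      push_cast
      ring
    have hℓ : ((ℓ : ℚ[X]) : ℚ⟦X⟧) = ℓ := map_natCast coeToPowerSeries.ringHom ℓ
    rw [eulerian, mk_natCast_pow_succ_eq_X_mul_derivative]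
    push_cast
    rw [hD, ih, hℓ]
    ring

theorem coeff_eulerian_succ_succ (ℓ k : ℕ) :
    (eulerian (ℓ + 1)).coeff (k + 1) =
      (k + 1) * (eulerian ℓ).coeff (k + 1) + (ℓ + 1 - k) * (eulerian ℓ).coeff k := by
  rw [eulerian, Polynomial.coeff_X_mul, Polynomial.coeff_add, sub_mul, one_mul,
    Polynomial.coeff_sub, Polynomial.coeff_derivative]
  rcases k with _ | k
  · simp [Polynomial.mul_coeff_zero]
  · rw [Polynomial.coeff_X_mul, Polynomial.coeff_derivative]
    simp only [← Nat.cast_one (R := ℚ[X]), ← Nat.cast_add, Polynomial.coeff_natCast_mul]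
    push_cast
    ring

theorem coeff_eulerian_succ_zero (ℓ : ℕ) : (eulerian (ℓ + 1)).coeff 0 = 0 := by
  simp [eulerian]

theorem coeff_eulerian_eq_zero {ℓ k : ℕ} (h : ℓ < k) : (eulerian ℓ).coeff k = 0 := by
  induction ℓ generalizing k with
  | zero => simp [eulerian, Polynomial.coeff_one, h.ne']
  | succ ℓ ih =>
    obtain ⟨k, rfl⟩ := Nat.exists_eq_succ_of_ne_zero (by omega : k ≠ 0)
    rw [coeff_eulerian_succ_succ, ih (by omega), ih (by omega)]
    ring

theorem natDegree_eulerian_le (ℓ : ℕ) : (eulerian ℓ).natDegree ≤ ℓ :=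
  natDegree_le_iff_coeff_eq_zero.mpr fun _ hk => coeff_eulerian_eq_zero (by exact_mod_cast hk)

theorem coeff_eulerian_eq_of_add_eq {ℓ i j : ℕ} (hℓ : ℓ ≠ 0) (h : i + j = ℓ + 1) :
    (eulerian ℓ).coeff i = (eulerian ℓ).coeff j := by
  induction ℓ, Nat.one_le_iff_ne_zero.mpr hℓ using Nat.le_induction generalizing i j with
  | base =>
    have hX : eulerian 1 = Polynomial.X := by simp [eulerian]
    rw [hX]
    obtain ⟨rfl, rfl⟩ | ⟨rfl, rfl⟩ | ⟨rfl, rfl⟩ :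
        (i = 0 ∧ j = 2) ∨ (i = 1 ∧ j = 1) ∨ (i = 2 ∧ j = 0) := by
      omega
    all_goals simp [Polynomial.coeff_X]
  | succ ℓ hℓ ih =>
    rcases i with _ | i
    · rw [coeff_eulerian_succ_zero, coeff_eulerian_eq_zero (by omega)]
    rcases j with _ | j
    · rw [coeff_eulerian_succ_zero, coeff_eulerian_eq_zero (by omega)]
    have hij : (i : ℚ) + j = ℓ := by exact_mod_cast (by omega : i + j = ℓ)
    rw [coeff_eulerian_succ_succ, coeff_eulerian_succ_succ,
      ih (by omega) (i := i + 1) (j := j) (by omega),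
      ih (by omega) (i := i) (j := j + 1) (by omega)]
    linear_combination ((eulerian ℓ).coeff j - (eulerian ℓ).coeff (j + 1)) * hij

theorem reflect_eulerian {ℓ : ℕ} (hℓ : ℓ ≠ 0) : reflect (ℓ + 1) (eulerian ℓ) = eulerian ℓ := by
  ext k
  rw [coeff_reflect]
  by_cases hk : k ≤ ℓ + 1
  · rw [revAt_le hk]
    exact coeff_eulerian_eq_of_add_eq hℓ (by omega)
  · rw [revAt_eq_self_of_lt (by omega)]

theorem eval_neg_one_eq_zero_of_reflect_eq {R : Type*} [CommRing R] [NoZeroDivisors R]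
    [CharZero R] {p : R[X]} {N : ℕ} (hN : Odd N) (hp : p.natDegree ≤ N) (h : reflect N p = p) :
    p.eval (-1) = 0 := by
  let _ : Invertible (1 : R) := invertibleOne
  let _ : Invertible (-1 : R) := invertibleNeg 1
  have := eval₂_reflect_mul_pow (RingHom.id R) (-1) N p hp
  rw [h, invOf_neg, invOf_one, hN.neg_one_pow, mul_neg_one] at this
  exact self_eq_neg.mp this.symm

theorem eval_neg_one_eulerian {ℓ : ℕ} (hℓ : ℓ ≠ 0) (hev : Even ℓ) :
    (eulerian ℓ).eval (-1) = 0 :=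
  eval_neg_one_eq_zero_of_reflect_eq hev.add_one ((natDegree_eulerian_le ℓ).trans ℓ.le_succ)
    (reflect_eulerian hℓ)

open Nat in
noncomputable def expSubOneDivX : ℚ⟦X⟧ := PowerSeries.mk fun n => 1 / (n + 1)!

-- `1 / (1 - exp X) = -1 / X + bernoulliTail`, since `bernoulliPowerSeries = X / (exp X - 1)`.
open Nat in
noncomputable def bernoulliTail : ℚ⟦X⟧ :=
  PowerSeries.mk fun n => -_root_.bernoulli (n + 1) / (n + 1)!

theorem X_mul_expSubOneDivX : PowerSeries.X * expSubOneDivX = exp ℚ - 1 := by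
  ext (_ | n)
  · simp
  · simp [coeff_succ_X_mul, expSubOneDivX, PowerSeries.coeff_one]

theorem constantCoeff_expSubOneDivX : constantCoeff expSubOneDivX = 1 := by
  simp [← coeff_zero_eq_constantCoeff_apply, expSubOneDivX]

theorem X_mul_derivative_expSubOneDivX :
    PowerSeries.X * d⁄dX ℚ expSubOneDivX = exp ℚ - expSubOneDivX := by
  have h := congrArg (d⁄dX ℚ) X_mul_expSubOneDivX
  rw [map_sub, Derivation.leibniz, derivative_exp, PowerSeries.derivative_X,
    Derivation.map_one_eq_zero, smul_eq_mul, smul_eq_mul, mul_one, sub_zero] at h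
  linear_combination h

theorem bernoulliPowerSeries_eq_one_sub_X_mul :
    bernoulliPowerSeries ℚ = 1 - PowerSeries.X * bernoulliTail := by
  ext (_ | n)
  · simp [bernoulliPowerSeries]
  · simp [bernoulliPowerSeries, bernoulliTail, coeff_succ_X_mul, neg_div]

theorem expSubOneDivX_add_one_sub_exp_mul_bernoulliTail :
    expSubOneDivX + (1 - exp ℚ) * bernoulliTail = 1 := by
  have h := bernoulliPowerSeries_mul_exp_sub_one ℚ
  rw [bernoulliPowerSeries_eq_one_sub_X_mul] at h
  refine mul_left_cancel₀ (PowerSeries.X_ne_zero (R := ℚ)) ?_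
  linear_combination h + X_mul_expSubOneDivX

theorem aeval_exp_eulerian_succ (ℓ : ℕ) :
    aeval (exp ℚ) (eulerian (ℓ + 1)) =
      (1 - exp ℚ) * d⁄dX ℚ (aeval (exp ℚ) (eulerian ℓ))
        + (ℓ + 1 : ℚ⟦X⟧) * exp ℚ * aeval (exp ℚ) (eulerian ℓ) := by
  rw [Derivation.map_aeval, derivative_exp, eulerian]
  simp only [map_mul, map_add, map_sub, map_one, map_natCast, Polynomial.aeval_X, smul_eq_mul]
  ring

theorem one_sub_exp_mul_derivative_expSubOneDivX_pow_add (n : ℕ) :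
    (1 - exp ℚ) * d⁄dX ℚ (expSubOneDivX ^ (n + 1))
        + (n + 1 : ℚ⟦X⟧) * exp ℚ * expSubOneDivX ^ (n + 1) =
      (n + 1 : ℚ⟦X⟧) * expSubOneDivX ^ (n + 2) := by
  refine mul_left_cancel₀ (PowerSeries.X_ne_zero (R := ℚ)) ?_
  rw [Derivation.leibniz_pow, Nat.add_sub_cancel, smul_eq_mul, nsmul_eq_mul]
  push_cast
  linear_combination ((n + 1 : ℚ⟦X⟧) * expSubOneDivX ^ n * (1 - exp ℚ))
      * X_mul_derivative_expSubOneDivX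
    + ((n + 1 : ℚ⟦X⟧) * expSubOneDivX ^ n * (exp ℚ - expSubOneDivX)) * X_mul_expSubOneDivX

theorem one_sub_exp_mul_derivative_one_sub_exp_pow_mul_add (n : ℕ) (g : ℚ⟦X⟧) :
    (1 - exp ℚ) * d⁄dX ℚ ((1 - exp ℚ) ^ (n + 1) * g)
        + (n + 1 : ℚ⟦X⟧) * exp ℚ * ((1 - exp ℚ) ^ (n + 1) * g) =
      (1 - exp ℚ) ^ (n + 2) * d⁄dX ℚ g := by
  rw [Derivation.leibniz, Derivation.leibniz_pow, map_sub, Derivation.map_one_eq_zero,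
    derivative_exp, Nat.add_sub_cancel]
  simp only [smul_eq_mul, nsmul_eq_mul]
  push_cast
  ring

open Nat in
theorem aeval_exp_eulerian (ℓ : ℕ) :
    aeval (exp ℚ) (eulerian ℓ) =
      ℓ ! * expSubOneDivX ^ (ℓ + 1) + (1 - exp ℚ) ^ (ℓ + 1) * (d⁄dX ℚ)^[ℓ] bernoulliTail := by
  induction ℓ with
  | zero =>
    simpa [eulerian] using expSubOneDivX_add_one_sub_exp_mul_bernoulliTail.symm
  | succ ℓ ih =>
    rw [aeval_exp_eulerian_succ, ih, map_add, Derivation.leibniz, Derivation.map_natCast,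
      smul_eq_mul, smul_zero, add_zero, Function.iterate_succ_apply' _ ℓ, factorial_succ]
    push_cast
    linear_combination (ℓ ! : ℚ⟦X⟧) * one_sub_exp_mul_derivative_expSubOneDivX_pow_add ℓ
      + one_sub_exp_mul_derivative_one_sub_exp_pow_mul_add ℓ ((d⁄dX ℚ)^[ℓ] bernoulliTail)

theorem constantCoeff_aeval_exp (p : ℚ[X]) : constantCoeff (aeval (exp ℚ) p) = p.eval 1 := by
  induction p using Polynomial.induction_on' with
  | add p q hp hq => simp [hp, hq]
  | monomial n a => simp [← C_mul_X_pow_eq_monomial]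

theorem X_sub_one_pow_dvd_of_X_pow_dvd_aeval_exp {p : ℚ[X]} {k : ℕ}
    (h : PowerSeries.X ^ k ∣ aeval (exp ℚ) p) : (Polynomial.X - 1) ^ k ∣ p := by
  induction k generalizing p with
  | zero => simp
  | succ k ih =>
    have hroot : p.IsRoot 1 := by
      rw [IsRoot, ← constantCoeff_aeval_exp, ← PowerSeries.X_dvd_iff]
      exact (dvd_pow_self _ k.succ_ne_zero).trans h
    obtain ⟨q, rfl⟩ := dvd_iff_isRoot.mpr hroot
    rw [map_one, pow_succ']
    refine mul_dvd_mul_left _ (ih ?_)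
    have hU : IsUnit expSubOneDivX := by
      rw [isUnit_iff_constantCoeff, constantCoeff_expSubOneDivX]
      exact isUnit_one
    rw [map_mul, map_sub, Polynomial.aeval_X, map_one, map_one, ← X_mul_expSubOneDivX,
      pow_succ', mul_assoc, mul_dvd_mul_iff_left PowerSeries.X_ne_zero] at h
    exact hU.dvd_mul_left.mp h

theorem aeval_exp_comp_X_pow (p : ℚ[X]) (m : ℕ) :
    aeval (exp ℚ) (p.comp (Polynomial.X ^ m)) = rescale (m : ℚ) (aeval (exp ℚ) p) := by
  rw [aeval_comp, aeval_X_pow, exp_pow_eq_rescale_exp, ← coe_rescaleAlgHom, RingHom.coe_coe,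
    aeval_algHom_apply]

theorem geom_sum_exp_mul_expSubOneDivX (m : ℕ) :
    (∑ i ∈ range m, exp ℚ ^ i) * expSubOneDivX =
      (m : ℚ⟦X⟧) * rescale (m : ℚ) expSubOneDivX := by
  refine mul_left_cancel₀ (PowerSeries.X_ne_zero (R := ℚ)) ?_
  have h := congrArg (rescale (m : ℚ)) X_mul_expSubOneDivX
  rw [map_mul, rescale_X, map_natCast, map_sub, map_one, ← exp_pow_eq_rescale_exp] at h
  linear_combination
    (∑ i ∈ range m, exp ℚ ^ i) * X_mul_expSubOneDivX + geom_sum_mul (exp ℚ) m - h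

theorem one_sub_exp_pow (m : ℕ) :
    1 - exp ℚ ^ m = -((m : ℚ⟦X⟧) * PowerSeries.X * rescale (m : ℚ) expSubOneDivX) := by
  have h := congrArg (rescale (m : ℚ)) X_mul_expSubOneDivX
  rw [map_mul, rescale_X, map_natCast, map_sub, map_one, ← exp_pow_eq_rescale_exp] at h
  linear_combination h

theorem constantCoeff_rescale {R : Type*} [CommSemiring R] (a : R) (f : R⟦X⟧) :
    constantCoeff (rescale a f) = constantCoeff f := by
  rw [← coeff_zero_eq_constantCoeff_apply, coeff_rescale, pow_zero, one_mul,
    coeff_zero_eq_constantCoeff_apply]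

open Nat in
theorem aeval_exp_eulerian_comp_sub {m : ℕ} (hm : m ≠ 0) (ℓ : ℕ) :
    aeval (exp ℚ) ((eulerian ℓ).comp (Polynomial.X ^ m) -
        (Polynomial.C (m : ℚ)⁻¹ * ∑ i ∈ range m, Polynomial.X ^ i) ^ (ℓ + 1) * eulerian ℓ) =
      (-(PowerSeries.X * rescale (m : ℚ) expSubOneDivX)) ^ (ℓ + 1) *
        ((m : ℚ⟦X⟧) ^ (ℓ + 1) * rescale (m : ℚ) ((d⁄dX ℚ)^[ℓ] bernoulliTail)
          - (d⁄dX ℚ)^[ℓ] bernoulliTail) := by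
  set G := (d⁄dX ℚ)^[ℓ] bernoulliTail
  set V := rescale (m : ℚ) expSubOneDivX
  set S := PowerSeries.C (m : ℚ)⁻¹ * ∑ i ∈ range m, exp ℚ ^ i
  have hCm : PowerSeries.C (m : ℚ)⁻¹ * (m : ℚ⟦X⟧) = 1 := by
    rw [← map_natCast PowerSeries.C, ← map_mul, inv_mul_cancel₀ (Nat.cast_ne_zero.mpr hm),
      map_one]
  have hSU : S ^ (ℓ + 1) * expSubOneDivX ^ (ℓ + 1) = V ^ (ℓ + 1) := by
    rw [← mul_pow]
    congr 1
    linear_combination PowerSeries.C (m : ℚ)⁻¹ * geom_sum_exp_mul_expSubOneDivX m + V * hCm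
  have hS : S ^ (ℓ + 1) * (1 - exp ℚ) ^ (ℓ + 1) = (-(PowerSeries.X * V)) ^ (ℓ + 1) := by
    rw [← mul_pow]
    congr 1
    linear_combination -PowerSeries.C (m : ℚ)⁻¹ * geom_sum_mul (exp ℚ) m
      + PowerSeries.C (m : ℚ)⁻¹ * one_sub_exp_pow m - PowerSeries.X * V * hCm
  have hAS : aeval (exp ℚ) (Polynomial.C (m : ℚ)⁻¹ * ∑ i ∈ range m, Polynomial.X ^ i) = S := by
    simp only [S, map_mul, map_sum, map_pow, Polynomial.aeval_X, Polynomial.aeval_C,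
      PowerSeries.algebraMap_apply, Algebra.algebraMap_self_apply]
  rw [map_sub, map_mul, map_pow, hAS, aeval_exp_comp_X_pow, aeval_exp_eulerian]
  simp only [map_add, map_mul, map_pow, map_natCast, map_sub, map_one,
    ← exp_pow_eq_rescale_exp, one_sub_exp_pow]
  linear_combination (-(ℓ ! : ℚ⟦X⟧)) * hSU - G * hS

theorem X_sub_one_pow_dvd_eulerian_comp_sub {ℓ m : ℕ} (hm : m ≠ 0)
    (hB : _root_.bernoulli (ℓ + 1) = 0) :
    (Polynomial.X - 1) ^ (ℓ + 2) ∣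
      (eulerian ℓ).comp (Polynomial.X ^ m) -
        (Polynomial.C (m : ℚ)⁻¹ * ∑ i ∈ range m, Polynomial.X ^ i) ^ (ℓ + 1) * eulerian ℓ := by
  apply X_sub_one_pow_dvd_of_X_pow_dvd_aeval_exp
  have hG : constantCoeff ((d⁄dX ℚ)^[ℓ] bernoulliTail) = 0 := by
    simp [constantCoeff_iterate_derivative, bernoulliTail, hB]
  rw [aeval_exp_eulerian_comp_sub hm, pow_succ]
  refine mul_dvd_mul (pow_dvd_pow_of_dvd (dvd_neg.mpr (dvd_mul_right _ _)) _)
    (PowerSeries.X_dvd_iff.mpr ?_)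
  rw [map_sub, map_mul, constantCoeff_rescale, hG, mul_zero, sub_zero]

/-- If `ℓ ≥ 2` is even then `A_ℓ(-1) = 0` and the strengthened congruence
`A_ℓ(x^m) ≡ ((1+x+⋯+x^{m-1})/m)^{ℓ+1}·A_ℓ(x) mod (x-1)^{ℓ+2}` holds for all `m ≥ 2`. -/
theorem eulerian_congruence_even (ℓ : ℕ) (hℓ : 2 ≤ ℓ) (hev : Even ℓ)
    (A : Polynomial ℚ)
    (hA : (A : PowerSeries ℚ) =
      (1 - PowerSeries.X) ^ (ℓ + 1) * PowerSeries.mk (fun n => (n : ℚ) ^ ℓ)) :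
    A.eval (-1) = 0 ∧
      ∀ m : ℕ, 2 ≤ m →
        (Polynomial.X - 1) ^ (ℓ + 2) ∣
          A.comp (Polynomial.X ^ m) -
            (Polynomial.C ((m : ℚ))⁻¹ * ∑ i ∈ Finset.range m, Polynomial.X ^ i)
                ^ (ℓ + 1) * A := by
  obtain rfl : A = eulerian ℓ := Polynomial.coe_inj.mp (hA.trans (coe_eulerian ℓ).symm)
  have hB : _root_.bernoulli (ℓ + 1) = 0 := bernoulli_eq_zero_of_odd hev.add_one (by omega)
  exact ⟨eval_neg_one_eulerian (by omega) hev,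
    fun m hm => X_sub_one_pow_dvd_eulerian_comp_sub (by omega) hB⟩
end

section
/- Let f(x) ∈ ℂ[x] be monic of degree ℓ > 0. If there exists an integer m ≥ 2 such that f(x^m) ≡ ((1 + x + ⋯ + x^{m-1})/m)^{ℓ+1} · f(x) mod (1-x)^{ℓ+1}, then f(x) = A_ℓ(x), the Eulerian polynomial. -/
/-!
Polynomials of degree `≤ ℓ` satisfying the congruence form a vector space on which `p ↦ p(1)`
is injective: if `p = (1 - x)^k g` with `1 ≤ k ≤ ℓ`, then `p(x^m) = (1 - x)^k s^k g(x^m)` with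
`s = 1 + x + ⋯ + x^{m-1}`, so the congruence modulo `(1 - x)^{k+1}` says `m^k g(1) = g(1)`, i.e.
`g(1) = 0`. Inductively `(1 - x)^{ℓ+1} ∣ p`, so `p = 0` once `p(1) = 0`. Hence it suffices that
`A_ℓ` is monic of degree `ℓ` and satisfies the congruence.

For `n ≥ ℓ + 1` the `n`-th coefficient of `(1 - x)^{ℓ+1} Σ P(k) x^k` is an `(ℓ+1)`-st forward
difference of `P`, which vanishes when `deg P ≤ ℓ`; this bounds the degree of `A_ℓ` and, applied
to `P(k) = (k - 1)^ℓ`, gives its leading coefficient. For the congruence, `s^{ℓ+1} A_ℓ` has the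
series `(1 - x^m)^{ℓ+1} Σ n^ℓ x^n`, whose coefficients at multiples of `m` are `m^ℓ` times those of
`A_ℓ` because `n ↦ n^ℓ` is homogeneous. The roots-of-unity filter with a primitive `m`-th root `μ`
then gives `m^{ℓ+1} A_ℓ(x^m) = Σ_j (s^{ℓ+1} A_ℓ)(μ^j x)`, and for `j ≠ 0` the term is divisible by
`(1 - x)^{ℓ+1}` because `s(μ^j x)` vanishes at `x = 1`.
-/

open Polynomial Finset
open scoped PowerSeries fwdDiff

theorem geom_sum_eq_zero_of_pow_eq_one {R : Type*} [CommRing R] [IsDomain R] {x : R} {m : ℕ}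
    (hx : x ≠ 1) (hxm : x ^ m = 1) : ∑ i ∈ range m, x ^ i = 0 := by
  have h := mul_neg_geom_sum x m
  rw [hxm, sub_self] at h
  exact (mul_eq_zero.mp h).resolve_left (sub_ne_zero.mpr hx.symm)

namespace PowerSeries

variable {R : Type*} [CommRing R]

theorem coeff_one_sub_X_pow_mul_mk (f : R → R) (j d : ℕ) :
    coeff (j + d) ((1 - X) ^ j * mk fun n => f n) = Δ_[1] ^[j] f d := by
  induction j generalizing d with
  | zero => simp
  | succ j ih =>
    rw [pow_succ', mul_assoc, sub_mul, one_mul, map_sub,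
      show j + 1 + d = j + (d + 1) by omega, ih, show j + (d + 1) = j + d + 1 by omega,
      coeff_succ_X_mul, ih, Function.iterate_succ_apply', fwdDiff]
    push_cast
    rfl

theorem coeff_one_sub_X_pow_mul_mk_eval_eq_zero {P : R[X]} {j k : ℕ} (hP : P.natDegree < j)
    (hk : j ≤ k) : coeff k ((1 - X) ^ j * mk fun n => P.eval (n : R)) = 0 := by
  obtain ⟨d, rfl⟩ := Nat.exists_eq_add_of_le hk
  rw [coeff_one_sub_X_pow_mul_mk P.eval, Polynomial.fwdDiff_iter_eq_zero_of_degree_lt hP]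
  rfl

theorem coeff_one_sub_X_pow_self (n : ℕ) : coeff n ((1 - X : R⟦X⟧) ^ n) = (-1) ^ n := by
  have hpoly : (1 - Polynomial.X : R[X]) ^ n =
      Polynomial.C ((-1) ^ n) * (Polynomial.X + Polynomial.C (-1)) ^ n := by
    rw [map_pow, ← mul_pow]
    congr 1
    simp only [map_neg, map_one]
    ring
  rw [show (1 - X : R⟦X⟧) ^ n = ((1 - Polynomial.X : R[X]) ^ n : R[X]) by push_cast; rfl,
    Polynomial.coeff_coe, hpoly, Polynomial.coeff_C_mul, coeff_X_add_C_pow]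
  simp

theorem coeff_expand_mul_mk_pow {m : ℕ} (hm : 0 < m) (ℓ k : ℕ) (P : R[X]) :
    coeff (m * k) ((Polynomial.expand R m P : R⟦X⟧) * mk fun n => (n : R) ^ ℓ) =
      (m : R) ^ ℓ * coeff k ((P : R⟦X⟧) * mk fun n => (n : R) ^ ℓ) := by
  induction P using Polynomial.induction_on' with
  | add p q hp hq => simp only [map_add, Polynomial.coe_add, add_mul, hp, hq, mul_add]
  | monomial i a =>
    rw [Polynomial.expand_monomial]
    simp only [← Polynomial.C_mul_X_pow_eq_monomial,
      Polynomial.coe_mul, Polynomial.coe_C, Polynomial.coe_pow, Polynomial.coe_X, mul_assoc,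
      coeff_C_mul, coeff_X_pow_mul', coeff_mk]
    by_cases hik : i ≤ k
    · rw [if_pos (show i * m ≤ m * k by nlinarith), if_pos hik, Nat.cast_sub (by nlinarith),
        Nat.cast_sub hik]
      push_cast
      rw [show (m * k - i * m : R) = m * (k - i) by ring, mul_pow]
      ring
    · rw [if_neg (show ¬ i * m ≤ m * k by nlinarith), if_neg hik, mul_zero, mul_zero]

end PowerSeries

theorem IsPrimitiveRoot.sum_comp_C_pow_mul_X {R : Type*} [CommRing R] [IsDomain R]
    {μ : R} {m : ℕ} (hμ : IsPrimitiveRoot μ m) (hm : 0 < m) (p : R[X]) :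
    ∑ j ∈ range m, p.comp (C (μ ^ j) * X) = C (m : R) * expand R m (contract m p) := by
  ext n
  simp only [finsetSum_coeff, comp_C_mul_X_coeff, coeff_C_mul, ← mul_sum, coeff_expand hm]
  rw [sum_congr rfl fun j _ => pow_right_comm μ j n]
  by_cases hn : m ∣ n
  · rw [if_pos hn, coeff_contract hm.ne', Nat.div_mul_cancel hn,
      (hμ.pow_eq_one_iff_dvd n).mpr hn]
    simp [mul_comm]
  · rw [if_neg hn, geom_sum_eq_zero_of_pow_eq_one (mt (hμ.pow_eq_one_iff_dvd n).mp hn)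
      (by rw [pow_right_comm, hμ.pow_eq_one, one_pow]), mul_zero, mul_zero]

namespace Polynomial

variable {R : Type*} [CommRing R]

theorem one_sub_X_dvd_iff {p : R[X]} : 1 - X ∣ p ↔ p.eval 1 = 0 := by
  rw [← neg_sub, neg_dvd, ← C_1, dvd_iff_isRoot, IsRoot.def]

theorem natDegree_one_sub_X_pow [Nontrivial R] [NoZeroDivisors R] (n : ℕ) :
    ((1 - X : R[X]) ^ n).natDegree = n := by
  rw [natDegree_pow, ← neg_sub, natDegree_neg, ← C_1, natDegree_X_sub_C, mul_one]

theorem one_sub_X_ne_zero [Nontrivial R] : (1 - X : R[X]) ≠ 0 := by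
  rw [← neg_sub, neg_ne_zero, ← C_1]
  exact X_sub_C_ne_zero 1

def IsEulerian (ℓ : ℕ) (A : R[X]) : Prop :=
  (A : R⟦X⟧) = (1 - PowerSeries.X) ^ (ℓ + 1) * PowerSeries.mk fun n => (n : R) ^ ℓ

section Congruence

variable {K : Type*} [Field K]

def eulerianCongruence (ℓ m : ℕ) : Submodule K K[X] where
  carrier := {p | (1 - X) ^ (ℓ + 1) ∣
    p.comp (X ^ m) - (C (m : K)⁻¹ * ∑ i ∈ range m, X ^ i) ^ (ℓ + 1) * p}
  add_mem' {p q} hp hq := by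
    simpa only [Set.mem_ofPred_eq, add_comp, mul_add, add_sub_add_comm] using dvd_add hp hq
  zero_mem' := by simp
  smul_mem' a p hp := by
    simpa only [Set.mem_ofPred_eq, smul_eq_C_mul, mul_comp, C_comp, mul_left_comm _ (C a),
      ← mul_sub] using hp.mul_left (C a)

theorem mem_eulerianCongruence {ℓ m : ℕ} {p : K[X]} :
    p ∈ eulerianCongruence ℓ m ↔ (1 - X) ^ (ℓ + 1) ∣
      p.comp (X ^ m) - (C (m : K)⁻¹ * ∑ i ∈ range m, X ^ i) ^ (ℓ + 1) * p :=
  Iff.rfl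

variable [CharZero K] {ℓ m : ℕ} {p : K[X]}

theorem one_sub_X_pow_succ_dvd_of_mem_eulerianCongruence (hm : 2 ≤ m)
    (hp : p ∈ eulerianCongruence ℓ m) {k : ℕ} (hk : 0 < k) (hkℓ : k ≤ ℓ)
    (hdvd : (1 - X) ^ k ∣ p) : (1 - X) ^ (k + 1) ∣ p := by
  obtain ⟨g, rfl⟩ := hdvd
  have hcomp : ((1 - X) ^ k * g).comp (X ^ m) =
      (1 - X) ^ k * ((∑ i ∈ range m, X ^ i) ^ k * g.comp (X ^ m)) := by
    rw [mul_comp, pow_comp, sub_comp, one_comp, X_comp, ← mul_neg_geom_sum, mul_pow]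
    ring
  have hsplit : (1 - X : K[X]) ^ (ℓ + 1) = (1 - X) ^ k * (1 - X) ^ (ℓ + 1 - k) := by
    rw [← pow_add]
    congr 1
    omega
  rw [mem_eulerianCongruence, hcomp, hsplit, mul_left_comm _ ((1 - X) ^ k), ← mul_sub,
    mul_dvd_mul_iff_left (pow_ne_zero k one_sub_X_ne_zero)] at hp
  have hg := one_sub_X_dvd_iff.mp ((dvd_pow_self (1 - X) (by omega)).trans hp)
  simp only [eval_sub, eval_mul, eval_pow, eval_comp, eval_X, eval_C, one_pow, eval_geom_sum,
    sum_const, card_range, nsmul_eq_mul, mul_one] at hg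
  rw [inv_mul_cancel₀ (Nat.cast_ne_zero.mpr (by omega)), one_pow, one_mul, ← sub_one_mul] at hg
  have hmk : (m : K) ^ k - 1 ≠ 0 := by
    rw [sub_ne_zero]
    exact_mod_cast (Nat.one_lt_pow hk.ne' (by omega)).ne'
  obtain ⟨h, rfl⟩ := one_sub_X_dvd_iff.mpr ((mul_eq_zero.mp hg).resolve_left hmk)
  exact ⟨h, by ring⟩

theorem eq_zero_of_mem_eulerianCongruence (hm : 2 ≤ m) (hp : p ∈ eulerianCongruence ℓ m)
    (hdeg : p.natDegree ≤ ℓ) (h1 : p.eval 1 = 0) : p = 0 := by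
  have hdvd : ∀ k ≤ ℓ, (1 - X) ^ (k + 1) ∣ p := by
    intro k hk
    induction k with
    | zero => simpa [one_sub_X_dvd_iff] using h1
    | succ k ih =>
      exact one_sub_X_pow_succ_dvd_of_mem_eulerianCongruence hm hp k.succ_pos hk (ih (by omega))
  refine eq_zero_of_dvd_of_natDegree_lt (hdvd ℓ le_rfl) ?_
  rw [natDegree_one_sub_X_pow]
  omega

end Congruence

namespace IsEulerian

variable {ℓ : ℕ} {A : R[X]}

theorem coeff_eq_zero (hA : IsEulerian ℓ A) {k : ℕ} (hk : ℓ < k) : A.coeff k = 0 := by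
  rw [← coeff_coe, hA]
  simpa using PowerSeries.coeff_one_sub_X_pow_mul_mk_eval_eq_zero (P := X ^ ℓ)
    ((natDegree_X_pow_le ℓ).trans_lt ℓ.lt_succ_self) hk

theorem natDegree_le (hA : IsEulerian ℓ A) : A.natDegree ≤ ℓ :=
  natDegree_le_iff_coeff_eq_zero.mpr fun _ => hA.coeff_eq_zero

theorem coeff_self (hA : IsEulerian ℓ A) : A.coeff ℓ = 1 := by
  have hshift : PowerSeries.X * (PowerSeries.mk fun n => (n : R) ^ ℓ) =
      (PowerSeries.mk fun n => ((X - C 1) ^ ℓ : R[X]).eval (n : R)) -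
        PowerSeries.C ((-1) ^ ℓ) := by
    ext (_ | n) <;> simp [PowerSeries.coeff_succ_X_mul, -map_pow]
  calc A.coeff ℓ = PowerSeries.coeff (ℓ + 1) (PowerSeries.X * (A : R⟦X⟧)) := by
        rw [PowerSeries.coeff_succ_X_mul, coeff_coe]
    _ = PowerSeries.coeff (ℓ + 1) ((1 - PowerSeries.X) ^ (ℓ + 1) *
          (PowerSeries.mk fun n => ((X - C 1) ^ ℓ : R[X]).eval (n : R))) -
        (-1) ^ ℓ * PowerSeries.coeff (ℓ + 1) ((1 - PowerSeries.X : R⟦X⟧) ^ (ℓ + 1)) := by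
        rw [hA, mul_left_comm, hshift, mul_sub, map_sub, PowerSeries.coeff_mul_C,
          mul_comm _ ((-1 : R) ^ ℓ)]
    _ = 1 := by
        rw [PowerSeries.coeff_one_sub_X_pow_mul_mk_eval_eq_zero
          ((natDegree_pow_le_of_le ℓ (natDegree_X_sub_C_le 1)).trans_lt (by omega)) le_rfl,
          PowerSeries.coeff_one_sub_X_pow_self]
        have hsq : ((-1 : R) ^ ℓ) ^ 2 = 1 := by
          rw [← pow_mul, mul_comm, pow_mul, neg_one_sq, one_pow]
        linear_combination hsq

theorem contract_geom_sum_pow_mul (hA : IsEulerian ℓ A) {m : ℕ} (hm : 0 < m) :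
    contract m ((∑ i ∈ range m, X ^ i) ^ (ℓ + 1) * A) = C ((m : R) ^ ℓ) * A := by
  have hseries : (((∑ i ∈ range m, X ^ i) ^ (ℓ + 1) * A : R[X]) : R⟦X⟧) =
      (expand R m ((1 - X) ^ (ℓ + 1)) : R⟦X⟧) * PowerSeries.mk fun n => (n : R) ^ ℓ := by
    rw [coe_mul, hA, map_pow, map_sub, map_one, expand_X, ← mul_neg_geom_sum, mul_pow]
    push_cast
    ring
  ext k
  rw [coeff_contract hm.ne', coeff_C_mul, ← coeff_coe, hseries, mul_comm k m,
    PowerSeries.coeff_expand_mul_mk_pow hm, coe_pow, coe_sub,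
    coe_one, coe_X, ← hA, coeff_coe]

theorem mem_eulerianCongruence {A : ℂ[X]} (hA : IsEulerian ℓ A) {m : ℕ} (hm : 0 < m) :
    A ∈ eulerianCongruence ℓ m := by
  have hμ := Complex.isPrimitiveRoot_exp m hm.ne'
  have hfilter := hμ.sum_comp_C_pow_mul_X hm ((∑ i ∈ range m, X ^ i) ^ (ℓ + 1) * A)
  rw [hA.contract_geom_sum_pow_mul hm, map_mul, expand_C, ← mul_assoc, ← C_mul, ← pow_succ',
    expand_eq_comp_X_pow] at hfilter
  have hdvd : (1 - X) ^ (ℓ + 1) ∣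
      C ((m : ℂ) ^ (ℓ + 1)) * A.comp (X ^ m) - (∑ i ∈ range m, X ^ i) ^ (ℓ + 1) * A := by
    obtain ⟨n, rfl⟩ := Nat.exists_eq_succ_of_ne_zero hm.ne'
    rw [← hfilter, sum_range_succ', pow_zero, C_1, one_mul, comp_X, add_sub_cancel_right]
    refine dvd_sum fun j hj => ?_
    rw [mul_comp, pow_comp]
    refine (pow_dvd_pow_of_dvd (one_sub_X_dvd_iff.mpr ?_) _).mul_right _
    rw [eval_comp, eval_mul, eval_C, eval_X, mul_one, eval_geom_sum]
    exact geom_sum_eq_zero_of_pow_eq_one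
      (hμ.pow_ne_one_of_pos_of_lt j.succ_ne_zero (by simpa using hj))
      (by rw [pow_right_comm, hμ.pow_eq_one, one_pow])
  rw [Polynomial.mem_eulerianCongruence]
  convert hdvd.mul_left (C ((m : ℂ)⁻¹ ^ (ℓ + 1))) using 1
  rw [mul_sub, ← mul_assoc, ← C_mul, ← mul_pow,
    inv_mul_cancel₀ (Nat.cast_ne_zero.mpr hm.ne'), one_pow, C_1, one_mul, mul_pow, ← C_pow,
    mul_assoc]

end IsEulerian

end Polynomial

theorem eulerian_characterization_general (ℓ : ℕ) (f : Polynomial ℂ)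
    (hmonic : f.Monic) (hdeg : f.natDegree = ℓ)
    (h : ∃ m : ℕ, 2 ≤ m ∧
      (1 - Polynomial.X) ^ (ℓ + 1) ∣
        f.comp (Polynomial.X ^ m) -
          (Polynomial.C ((m : ℂ))⁻¹ * ∑ i ∈ Finset.range m, Polynomial.X ^ i)
              ^ (ℓ + 1) * f)
    (A : Polynomial ℂ)
    (hA : (A : PowerSeries ℂ) =
      (1 - PowerSeries.X) ^ (ℓ + 1) * PowerSeries.mk (fun n => (n : ℂ) ^ ℓ)) :
    f = A := by
  obtain ⟨m, hm, hf⟩ := h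
  have hA : IsEulerian ℓ A := hA
  have hAcong : A ∈ eulerianCongruence ℓ m := hA.mem_eulerianCongruence (by omega)
  have hfcong : f ∈ eulerianCongruence ℓ m := hf
  have hf1 : f.eval 1 ≠ 0 := fun h0 =>
    hmonic.ne_zero (eq_zero_of_mem_eulerianCongruence hm hfcong hdeg.le h0)
  have hcomb : f.eval 1 • A = A.eval 1 • f := by
    refine sub_eq_zero.mp (eq_zero_of_mem_eulerianCongruence hm
      (sub_mem (Submodule.smul_mem _ _ hAcong) (Submodule.smul_mem _ _ hfcong)) ?_ ?_)
    · exact natDegree_sub_le_of_le ((natDegree_smul_le (f.eval 1) A).trans hA.natDegree_le)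
        ((natDegree_smul_le (A.eval 1) f).trans hdeg.le) |>.trans_eq (max_self ℓ)
    · simp [mul_comm]
  have hlead : f.eval 1 = A.eval 1 := by
    simpa [hA.coeff_self, hdeg ▸ hmonic.coeff_natDegree] using
      congr_arg (Polynomial.coeff · ℓ) hcomb
  rw [← hlead] at hcomb
  exact (smul_right_injective _ hf1 hcomb).symm

/-- Characterization of the Eulerian polynomial: if `f ∈ ℂ[x]` is monic of degree
`ℓ > 0` and satisfies `f(x^m) ≡ ((1+x+⋯+x^{m-1})/m)^{ℓ+1}·f(x) mod (1-x)^{ℓ+1}`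
for some `m ≥ 2`, then `f = A_ℓ`, the Eulerian polynomial. -/
theorem eulerian_characterization (ℓ : ℕ) (hℓ : 0 < ℓ) (f : Polynomial ℂ)
    (hmonic : f.Monic) (hdeg : f.natDegree = ℓ)
    (h : ∃ m : ℕ, 2 ≤ m ∧
      (1 - Polynomial.X) ^ (ℓ + 1) ∣
        f.comp (Polynomial.X ^ m) -
          (Polynomial.C ((m : ℂ))⁻¹ * ∑ i ∈ Finset.range m, Polynomial.X ^ i)
              ^ (ℓ + 1) * f)
    (A : Polynomial ℂ)
    (hA : (A : PowerSeries ℂ) =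
      (1 - PowerSeries.X) ^ (ℓ + 1) * PowerSeries.mk (fun n => (n : ℂ) ^ ℓ)) :
    f = A :=
  eulerian_characterization_general ℓ f hmonic hdeg h A hA
end

section
/- Let S be the shift operator (Sf)(t) = f(t-1) on ℚ[t], and let p ∈ ℚ[x]. If p(S)·h = 0 for some h ∈ ℚ[t] with deg h = ℓ, then (x-1)^{ℓ+1} divides p(x) in ℚ[x]. -/
open Polynomial Finset

noncomputable def Sop : Module.End ℚ (Polynomial ℚ) :=
  (Polynomial.aeval (Polynomial.X - 1 : Polynomial ℚ)).toLinearMap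

lemma Sop_apply (h : Polynomial ℚ) : Sop h = h.comp (X - 1) := rfl

lemma Sop_pow_apply (k : ℕ) (h : Polynomial ℚ) :
    (Sop ^ k) h = h.comp (X - C (k : ℚ)) := by
  induction k generalizing h with
  | zero => simp
  | succ n ih =>
    have : (Sop ^ (n + 1)) h = (Sop ^ n) (Sop h) := by
      rw [pow_succ, Module.End.mul_apply]
    rw [this, Sop_apply, ih, comp_assoc]
    congr 1
    push_cast
    simp [sub_comp]
    ring

lemma aeval_Sop_apply (p h : Polynomial ℚ) :
    (aeval Sop p) h =
      ∑ k ∈ Finset.range (p.natDegree + 1),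
        C (p.coeff k) * h.comp (X - C (k : ℚ)) := by
  rw [aeval_eq_sum_range, LinearMap.sum_apply]
  refine Finset.sum_congr rfl fun k _ => ?_
  rw [LinearMap.smul_apply, Sop_pow_apply, smul_eq_C_mul]

lemma coeff_comp_linear (h : Polynomial ℚ) (c : ℚ) (ℓ : ℕ) (hd : h.natDegree ≤ ℓ) :
    (h.comp (X - C c)).coeff ℓ = h.coeff ℓ := by
  have hX : (X - C c : Polynomial ℚ).natDegree = 1 := natDegree_X_sub_C c
  have hcomp : (h.comp (X - C c)).natDegree = h.natDegree := by
    rw [natDegree_comp, hX, mul_one]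
  rcases lt_or_eq_of_le hd with hlt | heq
  · rw [coeff_eq_zero_of_natDegree_lt (hcomp ▸ hlt),
      coeff_eq_zero_of_natDegree_lt hlt]
  · subst heq
    have h1 : (h.comp (X - C c)).coeff h.natDegree = (h.comp (X - C c)).leadingCoeff := by
      rw [leadingCoeff, hcomp]
    rw [h1, leadingCoeff_comp (by rw [hX]; norm_num), leadingCoeff_X_sub_C, one_pow,
      mul_one, leadingCoeff]

lemma root_one (ℓ : ℕ) (p h : Polynomial ℚ) (hdeg : h.degree = (ℓ : ℕ))
    (hann : (aeval Sop p) h = 0) : (X - 1 : Polynomial ℚ) ∣ p := by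
  have hne : h ≠ 0 := fun h0 => by simp [h0] at hdeg
  have hnat : h.natDegree = ℓ := natDegree_eq_of_degree_eq_some hdeg
  have hcoeff : ((aeval Sop p) h).coeff ℓ = p.eval 1 * h.coeff ℓ := by
    rw [aeval_Sop_apply, finset_sum_coeff]
    rw [Finset.sum_congr rfl (fun k _ => by
      rw [coeff_C_mul, coeff_comp_linear h _ ℓ hnat.le]), ← Finset.sum_mul]
    congr 1
    rw [eval_eq_sum_range]; simp
  rw [hann, coeff_zero] at hcoeff
  have hc : h.coeff ℓ ≠ 0 := by
    rw [← hnat, ← leadingCoeff]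
    exact leadingCoeff_ne_zero.mpr hne
  have hroot : p.eval 1 = 0 := by
    rcases mul_eq_zero.mp hcoeff.symm with h' | h'
    · exact h'
    · exact absurd h' hc
  have : (X - C (1 : ℚ)) ∣ p := dvd_iff_isRoot.mpr hroot
  simpa using this

lemma degree_delta (ℓ : ℕ) (h : Polynomial ℚ) (hdeg : h.degree = ((ℓ + 1 : ℕ) : WithBot ℕ)) :
    (h.comp (X - 1) - h).degree = (ℓ : ℕ) := by
  have hne : h ≠ 0 := by
    intro h0
    rw [h0, degree_zero] at hdeg
    exact absurd hdeg.symm (by exact_mod_cast WithBot.coe_ne_bot)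
  have hnat : h.natDegree = ℓ + 1 := natDegree_eq_of_degree_eq_some hdeg
  have hX1 : (X - 1 : Polynomial ℚ) = X - C 1 := by simp
  set g := h.comp (X - 1) - h with hg
  -- the coefficient of degree ℓ of g is -(ℓ+1) * leadingCoeff h ≠ 0
  have hcompcoeff : (h.comp (X - 1)).coeff ℓ = h.coeff ℓ - (ℓ + 1) * h.coeff (ℓ + 1) := by
    have ht : h.comp (X - 1) = taylor (-1) h := by
      rw [taylor_apply]; congr 1; simp; ring
    rw [ht, taylor_coeff]
    have hdle : (hasseDeriv ℓ h).natDegree < 2 := by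
      have := natDegree_hasseDeriv_le h ℓ
      omega
    rw [eval_eq_sum_range' hdle]
    rw [Finset.sum_range_succ, Finset.sum_range_succ, Finset.sum_range_zero]
    rw [hasseDeriv_coeff, hasseDeriv_coeff]
    have c1 : (1 + ℓ).choose ℓ = ℓ + 1 := by
      rw [Nat.add_comm]; exact Nat.choose_succ_self_right ℓ
    simp [Nat.choose_self, c1]
    ring_nf
  have hgcoeff : g.coeff ℓ = -(ℓ + 1) * h.coeff (ℓ + 1) := by
    rw [hg, coeff_sub, hcompcoeff]; ring
  have hlc : h.coeff (ℓ + 1) ≠ 0 := by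
    rw [← hnat, ← leadingCoeff]; exact leadingCoeff_ne_zero.mpr hne
  have hgne : g.coeff ℓ ≠ 0 := by
    rw [hgcoeff]
    exact mul_ne_zero (neg_ne_zero.mpr (by positivity)) hlc
  -- degree bound
  have hlccomp : (h.comp (X - 1)).leadingCoeff = h.leadingCoeff := by
    rw [hX1, leadingCoeff_comp (by rw [natDegree_X_sub_C]; norm_num),
      leadingCoeff_X_sub_C, one_pow, mul_one]
  have hcompne : h.comp (X - 1) ≠ 0 := fun h0 =>
    hne (leadingCoeff_eq_zero.mp (by rw [← hlccomp, h0, leadingCoeff_zero]))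
  have hdegcomp : (h.comp (X - 1)).degree = h.degree := by
    rw [degree_eq_natDegree hcompne, degree_eq_natDegree hne]
    rw [hX1, natDegree_comp, natDegree_X_sub_C, mul_one]
  have hlt : g.degree < h.degree := hdegcomp ▸ degree_sub_lt hdegcomp hcompne hlccomp
  have gne : g ≠ 0 := fun h0 => by simp [h0] at hgne
  have h2 : g.natDegree < ℓ + 1 := by
    rw [← hnat]
    exact natDegree_lt_natDegree gne hlt
  have h3 : ℓ ≤ g.natDegree := le_natDegree_of_ne_zero hgne
  rw [degree_eq_natDegree gne]
  norm_cast
  omega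

lemma aux_dvd : ∀ ℓ (p h : Polynomial ℚ), h.degree = (ℓ : ℕ) →
    (aeval Sop p) h = 0 → (X - 1 : Polynomial ℚ) ^ (ℓ + 1) ∣ p := by
  intro ℓ
  induction ℓ with
  | zero =>
    intro p h hdeg hann
    simpa using root_one 0 p h hdeg hann
  | succ n ih =>
    intro p h hdeg hann
    obtain ⟨q, rfl⟩ := root_one (n + 1) p h hdeg hann
    have key : (aeval Sop q) (h.comp (X - 1) - h) = 0 := by
      rw [mul_comm, map_mul, Module.End.mul_apply] at hann
      have e1 : (aeval Sop (X - 1 : Polynomial ℚ)) h = h.comp (X - 1) - h := by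
        rw [map_sub, aeval_X, map_one, LinearMap.sub_apply, Module.End.one_apply, Sop_apply]
      rwa [e1] at hann
    obtain ⟨r, rfl⟩ := ih q _ (degree_delta n h hdeg) key
    exact ⟨r, by ring⟩

/-- If an operator `p(S)` (with `p ∈ ℚ[x]` and `S` the shift `t ↦ t-1` on `ℚ[t]`,
so `p(S)·h = Σ_k p.coeff k · h(t-k)`) annihilates a polynomial `h` of degree exactly
`ℓ`, then `(x-1)^{ℓ+1}` divides `p`. -/
theorem shift_annihilator_divisible (ℓ : ℕ) (p h : Polynomial ℚ)
    (hdeg : h.degree = (ℓ : ℕ))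
    (hann : ∑ k ∈ Finset.range (p.natDegree + 1),
      Polynomial.C (p.coeff k) * h.comp (Polynomial.X - Polynomial.C (k : ℚ)) = 0) :
    (Polynomial.X - 1) ^ (ℓ + 1) ∣ p := by
  rw [← aeval_Sop_apply] at hann
  exact aux_dvd ℓ p h hdeg hann
end
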